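/- Let w be a weight sequence, H a separable complex Hilbert space, and A a compact operator on H. Suppose there is a sequence of Schur decompositions A = D_n + N_n, with normal parts D_n and quasi-nilpotent parts N_n ∈ E_{ẇ̄}(H), such that |N_n|_{ẇ̄} → 0 as n → ∞. Then A is normal. (Conversely, if A is normal then A = A + 0 is a Schur decomposition whose quasi-nilpotent part has gauge 0.) -/

import Mathlib

open Filter Topology

noncomputable section

def IsWeight (w : ℕ → ℝ) : Prop :=
  (∀ k, 1 ≤ k → w (k + 1) ≤ w k) ∧ (∀ k, 1 ≤ k → 0 ≤ w k) ∧
    Filter.Tendsto w Filter.atTop (nhds 0)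

def sNum {H₁ H₂ : Type*} [NormedAddCommGroup H₁] [NormedSpace ℂ H₁]
    [NormedAddCommGroup H₂] [NormedSpace ℂ H₂] (k : ℕ) (A : H₁ →L[ℂ] H₂) : ℝ :=
  sInf {c : ℝ | ∃ F : H₁ →L[ℂ] H₂,
    Module.rank ℂ (LinearMap.range (F : H₁ →ₗ[ℂ] H₂)) < (k : Cardinal) ∧ c = ‖A - F‖}

def MemE {H₁ H₂ : Type*} [NormedAddCommGroup H₁] [NormedSpace ℂ H₁]
    [NormedAddCommGroup H₂] [NormedSpace ℂ H₂] (w : ℕ → ℝ) (A : H₁ →L[ℂ] H₂) : Prop :=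
  IsCompactOperator A ∧ ∃ M : ℝ, 0 ≤ M ∧ ∀ k, 1 ≤ k → sNum k A ≤ M * w k

def gaugeE {H₁ H₂ : Type*} [NormedAddCommGroup H₁] [NormedSpace ℂ H₁]
    [NormedAddCommGroup H₂] [NormedSpace ℂ H₂] (w : ℕ → ℝ) (A : H₁ →L[ℂ] H₂) : ℝ :=
  sInf {M : ℝ | 0 ≤ M ∧ ∀ k, 1 ≤ k → sNum k A ≤ M * w k}

def dbl (w : ℕ → ℝ) (k : ℕ) : ℝ := w ((k + 1) / 2)

def gmean (w : ℕ → ℝ) (k : ℕ) : ℝ := (∏ n ∈ Finset.Icc 1 k, w n) ^ ((1 : ℝ) / (k : ℝ))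

def algMult {H : Type*} [NormedAddCommGroup H] [NormedSpace ℂ H] (A : H →L[ℂ] H) (z : ℂ) : ℕ :=
  Module.finrank ℂ (Module.End.maxGenEigenspace (A : H →ₗ[ℂ] H) z)

def IsEigSeq {H : Type*} [NormedAddCommGroup H] [NormedSpace ℂ H]
    (A : H →L[ℂ] H) (lam : ℕ → ℂ) : Prop :=
  (∀ k, 1 ≤ k → ‖lam (k + 1)‖ ≤ ‖lam k‖) ∧
  ∀ z : ℂ, z ≠ 0 →
    {k : ℕ | 1 ≤ k ∧ lam k = z}.Finite ∧ {k : ℕ | 1 ≤ k ∧ lam k = z}.ncard = algMult A z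

def IsSchurDecomp {H : Type*} [NormedAddCommGroup H] [InnerProductSpace ℂ H] [CompleteSpace H]
    (A D N : H →L[ℂ] H) : Prop :=
  A = D + N ∧ IsCompactOperator D ∧ IsCompactOperator N ∧ IsStarNormal D ∧
  (∀ z : ℂ, z ≠ 0 → algMult D z = algMult A z) ∧
  spectrum ℂ D = spectrum ℂ A ∧
  spectrum ℂ N = {0} ∧
  ∀ z : ℂ, z ∉ spectrum ℂ A →
    spectrum ℂ (Ring.inverse (algebraMap ℂ (H →L[ℂ] H) z - D) * N) = {0}

def Fw (C : ℝ) (w : ℕ → ℝ) (r : ℝ) : ℝ :=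
  (1 + r * w 1) *
    (1 + ∑' k : ℕ, (∏ n ∈ Finset.Icc 1 (k + 1), w n) ^ 2 * (C * r) ^ (2 * (k + 1)))

def Ftilde (C : ℝ) (w : ℕ → ℝ) (r : ℝ) : ℝ := r * Fw C w r

def specVar (s t : Set ℂ) : ℝ := ⨆ z : s, Metric.infDist (z : ℂ) t

def hausD (s t : Set ℂ) : ℝ := max (specVar s t) (specVar t s)

def pseudoSpec {H : Type*} [NormedAddCommGroup H] [NormedSpace ℂ H] [CompleteSpace H]
    (ε : ℝ) (A : H →L[ℂ] H) : Set ℂ :=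
  spectrum ℂ A ∪ {z : ℂ | z ∉ spectrum ℂ A ∧ 1 / ε < ‖resolvent A z‖}

variable {H : Type*} [NormedAddCommGroup H] [InnerProductSpace ℂ H] [CompleteSpace H]
  [TopologicalSpace.SeparableSpace H]

/-
`s₁(N) = ‖N‖` and the first doubled geometric mean of `w` is `w₁`, so `‖Nₙ‖ ≤ |Nₙ|_{ẇ̄} · w₁ → 0`.
Hence the normal operators `Dₙ = A - Nₙ` converge to `A` in norm, and normality is a closed
condition.
-/

theorem isClosed_setOf_isStarNormal {R : Type*} [Mul R] [Star R] [TopologicalSpace R]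
    [T2Space R] [ContinuousMul R] [ContinuousStar R] : IsClosed {a : R | IsStarNormal a} := by
  simp only [isStarNormal_iff, Commute, SemiconjBy]
  exact isClosed_eq (continuous_star.mul continuous_id) (continuous_id.mul continuous_star)

section ApproximationNumbers

variable {H₁ H₂ : Type*} [NormedAddCommGroup H₁] [NormedSpace ℂ H₁]
  [NormedAddCommGroup H₂] [NormedSpace ℂ H₂]

theorem rank_range_lt_one_iff (F : H₁ →L[ℂ] H₂) :
    Module.rank ℂ (LinearMap.range (F : H₁ →ₗ[ℂ] H₂)) < 1 ↔ F = 0 := by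
  rw [Cardinal.lt_one_iff, Submodule.rank_eq_zero, LinearMap.range_eq_bot,
    ← ContinuousLinearMap.toLinearMap_zero, ContinuousLinearMap.coe_inj]

theorem sNum_le_norm_sub {k : ℕ} (A F : H₁ →L[ℂ] H₂)
    (hF : Module.rank ℂ (LinearMap.range (F : H₁ →ₗ[ℂ] H₂)) < k) : sNum k A ≤ ‖A - F‖ :=
  csInf_le ⟨0, by rintro c ⟨G, -, rfl⟩; positivity⟩ ⟨F, hF, rfl⟩

theorem sNum_one (A : H₁ →L[ℂ] H₂) : sNum 1 A = ‖A‖ := by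
  have hzero : Module.rank ℂ (LinearMap.range ((0 : H₁ →L[ℂ] H₂) : H₁ →ₗ[ℂ] H₂)) < (1 : ℕ) := by
    rw [Nat.cast_one, rank_range_lt_one_iff]
  refine le_antisymm (by simpa using sNum_le_norm_sub A 0 hzero) ?_
  refine le_csInf ⟨_, 0, hzero, rfl⟩ ?_
  rintro c ⟨F, hF, rfl⟩
  rw [Nat.cast_one, rank_range_lt_one_iff] at hF
  simp [hF]

theorem gaugeE_zero (w : ℕ → ℝ) : gaugeE w (0 : H₁ →L[ℂ] H₂) = 0 := by
  have hmem : (0 : ℝ) ∈ {M : ℝ | 0 ≤ M ∧ ∀ k, 1 ≤ k → sNum k (0 : H₁ →L[ℂ] H₂) ≤ M * w k} := by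
    refine ⟨le_rfl, fun k hk => ?_⟩
    have h0 : Module.rank ℂ (LinearMap.range ((0 : H₁ →L[ℂ] H₂) : H₁ →ₗ[ℂ] H₂)) < k :=
      ((rank_range_lt_one_iff 0).mpr rfl).trans_le (by exact_mod_cast hk)
    simpa using sNum_le_norm_sub 0 0 h0
  exact le_antisymm (csInf_le ⟨0, fun M hM => hM.1⟩ hmem) (le_csInf ⟨0, hmem⟩ fun M hM => hM.1)

theorem MemE.sNum_le_gaugeE_mul {w : ℕ → ℝ} {A : H₁ →L[ℂ] H₂} (hA : MemE w A) {k : ℕ}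
    (hk : 1 ≤ k) (hwk : 0 ≤ w k) : sNum k A ≤ gaugeE w A * w k := by
  obtain ⟨-, M, hM0, hM⟩ := hA
  rcases hwk.eq_or_lt with hw0 | hwpos
  · simpa [← hw0] using hM k hk
  · rw [← div_le_iff₀ hwpos]
    exact le_csInf ⟨M, hM0, hM⟩ fun M' hM' => (div_le_iff₀ hwpos).mpr (hM'.2 k hk)

theorem MemE.norm_le_gaugeE_mul {w : ℕ → ℝ} {A : H₁ →L[ℂ] H₂} (hA : MemE w A) (hw : 0 ≤ w 1) :
    ‖A‖ ≤ gaugeE w A * w 1 :=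
  sNum_one A ▸ hA.sNum_le_gaugeE_mul le_rfl hw

end ApproximationNumbers

theorem dbl_gmean_one (w : ℕ → ℝ) : dbl (gmean w) 1 = w 1 := by
  simp [dbl, gmean]

theorem isSchurDecomp_self_zero {E : Type*} [NormedAddCommGroup E] [InnerProductSpace ℂ E]
    [CompleteSpace E] [Nontrivial E] {A : E →L[ℂ] E} (hA : IsCompactOperator A)
    (hAn : IsStarNormal A) : IsSchurDecomp A A 0 :=
  ⟨(add_zero A).symm, hA, isCompactOperator_zero, hAn, fun _ _ => rfl, rfl, spectrum.zero_eq,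
    fun _ _ => by rw [mul_zero, spectrum.zero_eq]⟩

/-- if the quasi-nilpotent parts of a sequence of Schur
decompositions of `A` have `ẇ̄`-gauges tending to `0`, then `A` is normal;
conversely a normal `A` has Schur decomposition `A = A + 0` with gauge-0
quasi-nilpotent part. -/
theorem stmt_9 [Nontrivial H] (w : ℕ → ℝ) (hw : IsWeight w)
    (A : H →L[ℂ] H) (hA : IsCompactOperator A)
    (D N : ℕ → (H →L[ℂ] H))
    (hSchur : ∀ n, IsSchurDecomp A (D n) (N n))
    (hmem : ∀ n, MemE (dbl (gmean w)) (N n))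
    (hlim : Filter.Tendsto (fun n => gaugeE (dbl (gmean w)) (N n))
      Filter.atTop (nhds 0)) :
    IsStarNormal A ∧
      (IsStarNormal A →
        IsSchurDecomp A A 0 ∧ gaugeE (dbl (gmean w)) (0 : H →L[ℂ] H) = 0) := by
  have hw1 : 0 ≤ dbl (gmean w) 1 := dbl_gmean_one w ▸ hw.2.1 1 le_rfl
  have hN : Tendsto N atTop (𝓝 0) := by
    rw [tendsto_zero_iff_norm_tendsto_zero]
    refine squeeze_zero (fun n => norm_nonneg _) (fun n => (hmem n).norm_le_gaugeE_mul hw1) ?_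
    simpa using hlim.mul_const (dbl (gmean w) 1)
  have hD : Tendsto D atTop (𝓝 A) := by
    have hDeq : D = fun n => A - N n := funext fun n => eq_sub_of_add_eq (hSchur n).1.symm
    simpa [hDeq] using tendsto_const_nhds (x := A).sub hN
  have hAn : IsStarNormal A :=
    isClosed_setOf_isStarNormal.mem_of_tendsto hD (Eventually.of_forall fun n => (hSchur n).2.2.2.1)
  exact ⟨hAn, fun _ => ⟨isSchurDecomp_self_zero hA hAn, gaugeE_zero _⟩⟩

end
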